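/- Corollary 2.5 (first chain): let M ≥ m > 0 and x, y, z ∈ X with Re(My − x, x − my | z) ≥ 0. Then 0 ≤ ‖x|z‖‖y|z‖ − |(x,y|z)| ≤ ‖x|z‖‖y|z‖ − Re(x,y|z) ≤ (1/2)·((√M − √m)²/√(mM))·Re(x,y|z) ≤ (1/2)·((√M − √m)²/√(mM))·|(x,y|z)|. -/

import Mathlib

/-!
Fixing `z`, the form `(x, y) ↦ (y, x | z)` is a positive semidefinite inner product, so the
Cauchy–Schwarz inequality `|(x, y | z)| ≤ ‖x|z‖ ‖y|z‖` holds. Expanding the hypothesis gives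
`‖x|z‖² + mM ‖y|z‖² ≤ (M + m) Re (x, y | z)`, and by AM-GM the left side is at least
`2 √(mM) ‖x|z‖ ‖y|z‖`; rearranging, with `M + m - 2√(mM) = (√M - √m)²`, gives the reverse
inequality.
-/

open RCLike

/-- A 2-inner product space over `𝕜 = ℝ` or `ℂ`. -/
structure TwoIP (𝕜 : Type) (X : Type) [RCLike 𝕜] [AddCommGroup X] [Module 𝕜 X] where
  ip : X → X → X → 𝕜
  re_nonneg : ∀ x z : X, 0 ≤ re (ip x x z)
  im_zero : ∀ x z : X, im (ip x x z) = 0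
  eq_zero_iff : ∀ x z : X, ip x x z = 0 ↔ ¬ LinearIndependent 𝕜 ![x, z]
  swap : ∀ x z : X, ip x x z = ip z z x
  conj_symm : ∀ x y z : X, ip x y z = (starRingEnd 𝕜) (ip y x z)
  smul_left : ∀ (α : 𝕜) (x y z : X), ip (α • x) y z = α * ip x y z
  add_left : ∀ x x' y z : X, ip (x + x') y z = ip x y z + ip x' y z

namespace TwoIP

variable {𝕜 X : Type} [RCLike 𝕜] [AddCommGroup X] [Module 𝕜 X] (T : TwoIP 𝕜 X)

theorem ip_add_right (x y y' z : X) : T.ip x (y + y') z = T.ip x y z + T.ip x y' z := by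
  rw [T.conj_symm, T.add_left, map_add, ← T.conj_symm, ← T.conj_symm]

theorem ip_smul_right (α : 𝕜) (x y z : X) : T.ip x (α • y) z = starRingEnd 𝕜 α * T.ip x y z := by
  rw [T.conj_symm, T.smul_left, map_mul, ← T.conj_symm]

theorem ip_sub_left (x x' y z : X) : T.ip (x - x') y z = T.ip x y z - T.ip x' y z := by
  rw [sub_eq_add_neg, ← neg_one_smul 𝕜 x', T.add_left, T.smul_left, neg_one_mul, ← sub_eq_add_neg]

theorem ip_sub_right (x y y' z : X) : T.ip x (y - y') z = T.ip x y z - T.ip x y' z := by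
  rw [T.conj_symm, ip_sub_left, map_sub, ← T.conj_symm, ← T.conj_symm]

/-- Freezing the third argument gives a positive semidefinite inner product, written with
Mathlib's convention of conjugate-linearity in the first argument. -/
abbrev toPreInnerProductSpaceCore (z : X) : PreInnerProductSpace.Core 𝕜 X where
  inner x y := T.ip y x z
  conj_inner_symm x y := (T.conj_symm y x z).symm
  re_inner_nonneg x := T.re_nonneg x z
  add_left x x' y := T.ip_add_right y x x' z
  smul_left x y α := T.ip_smul_right α y x z

theorem norm_ip_le_sqrt_mul_sqrt (x y z : X) :
    ‖T.ip x y z‖ ≤ √(re (T.ip x x z)) * √(re (T.ip y y z)) := by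
  have hcs := @InnerProductSpace.Core.inner_mul_inner_self_le 𝕜 X _ _ _
    (T.toPreInnerProductSpaceCore z) y x
  change ‖T.ip x y z‖ * ‖T.ip y x z‖ ≤ re (T.ip y y z) * re (T.ip x x z) at hcs
  rw [T.conj_symm y x z, RCLike.norm_conj, ← sq] at hcs
  rw [← Real.sqrt_mul (T.re_nonneg x z), ← Real.sqrt_sq (norm_nonneg _), mul_comm (re _)]
  exact Real.sqrt_le_sqrt hcs

theorem re_ip_smul_sub_sub_smul (x y z : X) (m M : ℝ) :
    re (T.ip ((M : 𝕜) • y - x) (x - (m : 𝕜) • y) z)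
      = (M + m) * re (T.ip x y z) - re (T.ip x x z) - M * m * re (T.ip y y z) := by
  rw [T.ip_sub_left, T.ip_sub_right, T.ip_sub_right, T.smul_left, T.smul_left, T.ip_smul_right,
    T.ip_smul_right, conj_ofReal, T.conj_symm y x z]
  simp only [map_sub, re_ofReal_mul, conj_re]
  ring

end TwoIP

theorem sqrt_mul_sqrt_sub_le_of_add_le {a b r m M : ℝ} (ha : 0 ≤ a) (hb : 0 ≤ b) (hm : 0 < m)
    (hM0 : 0 < M) (h : a + m * M * b ≤ (M + m) * r) :
    √a * √b - r ≤ 1 / 2 * ((√M - √m) ^ 2 / √(m * M)) * r := by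
  set s := √(m * M)
  have hs : 0 < s := Real.sqrt_pos.2 (mul_pos hm hM0)
  have hs_sq : s ^ 2 = m * M := Real.sq_sqrt (mul_pos hm hM0).le
  have h_sq : (√M - √m) ^ 2 = M + m - 2 * s := by
    rw [sub_sq, Real.sq_sqrt hM0.le, Real.sq_sqrt hm.le,
      show s = √m * √M from Real.sqrt_mul hm.le M]
    ring
  -- AM-GM: `a + s² b - 2 s √a √b = (√a - s √b)²`
  have amgm : 2 * s * (√a * √b) ≤ a + m * M * b := by
    nlinarith [sq_nonneg (√a - s * √b), Real.sq_sqrt ha, Real.sq_sqrt hb]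
  rw [h_sq, show 1 / 2 * ((M + m - 2 * s) / s) * r = ((M + m) * r - 2 * s * r) / (2 * s) by
    field_simp, le_div_iff₀ (by positivity)]
  linarith

theorem stmt_general {𝕜 X : Type} [RCLike 𝕜] [AddCommGroup X] [Module 𝕜 X]
    (T : TwoIP 𝕜 X) (x y z : X) (m M : ℝ) (hm : 0 < m) (hM : m ≤ M)
    (h : 0 ≤ re (T.ip (((M : ℝ) : 𝕜) • y - x) (x - ((m : ℝ) : 𝕜) • y) z)) :
    0 ≤ Real.sqrt (re (T.ip x x z)) * Real.sqrt (re (T.ip y y z)) - ‖T.ip x y z‖ ∧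
    Real.sqrt (re (T.ip x x z)) * Real.sqrt (re (T.ip y y z)) - ‖T.ip x y z‖
      ≤ Real.sqrt (re (T.ip x x z)) * Real.sqrt (re (T.ip y y z)) - re (T.ip x y z) ∧
    Real.sqrt (re (T.ip x x z)) * Real.sqrt (re (T.ip y y z)) - re (T.ip x y z)
      ≤ (1/2) * ((Real.sqrt M - Real.sqrt m) ^ 2 / Real.sqrt (m * M)) * re (T.ip x y z) ∧
    (1/2) * ((Real.sqrt M - Real.sqrt m) ^ 2 / Real.sqrt (m * M)) * re (T.ip x y z)
      ≤ (1/2) * ((Real.sqrt M - Real.sqrt m) ^ 2 / Real.sqrt (m * M)) * ‖T.ip x y z‖ := by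
  rw [T.re_ip_smul_sub_sub_smul] at h
  have h_reverse : re (T.ip x x z) + m * M * re (T.ip y y z) ≤ (M + m) * re (T.ip x y z) := by
    linarith
  have h_re_le_norm := re_le_norm (T.ip x y z)
  refine ⟨sub_nonneg.2 (T.norm_ip_le_sqrt_mul_sqrt x y z), by linarith, ?_, ?_⟩
  · exact sqrt_mul_sqrt_sub_le_of_add_le (T.re_nonneg x z) (T.re_nonneg y z) hm
      (hm.trans_le hM) h_reverse
  · exact mul_le_mul_of_nonneg_left h_re_le_norm (by positivity)

theorem stmt {𝕜 X : Type} [RCLike 𝕜] [AddCommGroup X] [Module 𝕜 X]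
    (T : TwoIP 𝕜 X) (hdim : 1 < Module.rank 𝕜 X) (x y z : X) (m M : ℝ) (hm : 0 < m) (hM : m ≤ M)
    (h : 0 ≤ re (T.ip (((M : ℝ) : 𝕜) • y - x) (x - ((m : ℝ) : 𝕜) • y) z)) :
    0 ≤ Real.sqrt (re (T.ip x x z)) * Real.sqrt (re (T.ip y y z)) - ‖T.ip x y z‖ ∧
    Real.sqrt (re (T.ip x x z)) * Real.sqrt (re (T.ip y y z)) - ‖T.ip x y z‖
      ≤ Real.sqrt (re (T.ip x x z)) * Real.sqrt (re (T.ip y y z)) - re (T.ip x y z) ∧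
    Real.sqrt (re (T.ip x x z)) * Real.sqrt (re (T.ip y y z)) - re (T.ip x y z)
      ≤ (1/2) * ((Real.sqrt M - Real.sqrt m) ^ 2 / Real.sqrt (m * M)) * re (T.ip x y z) ∧
    (1/2) * ((Real.sqrt M - Real.sqrt m) ^ 2 / Real.sqrt (m * M)) * re (T.ip x y z)
      ≤ (1/2) * ((Real.sqrt M - Real.sqrt m) ^ 2 / Real.sqrt (m * M)) * ‖T.ip x y z‖ :=
  stmt_general T x y z m M hm hM h
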